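/- The KMS wedge domain on anti-de Sitter space is the Wick rotation of the fixed point set of τ̄_h in the positive tube domain: regarding M ⊆ V ⊆ V_ℂ, one has W_M^{KMS}(h) = κ_h({z ∈ 𝒯_M⁺ : τ̄_h(z) = z}). -/

import Mathlib

noncomputable section

/-- `V = ℝ^{d+1}`. -/
abbrev Vd (d : ℕ) : Type := Fin (d + 1) → ℝ

/-- The symmetric bilinear form `β(x,y) = x₀y₀ + x₁y₁ − x₂y₂ − ⋯ − x_dy_d`. -/
def betaB (d : ℕ) (x y : Vd d) : ℝ :=
  ∑ j : Fin (d + 1), (if (j : ℕ) ≤ 1 then (1 : ℝ) else -1) * x j * y j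

abbrev Mat (d : ℕ) : Type := Matrix (Fin (d + 1)) (Fin (d + 1)) ℝ

/-- The group `O(β)` of linear automorphisms of `V` preserving `β`,
as a set of matrices (with the subspace topology of `End(V)`). -/
def Obeta (d : ℕ) : Set (Mat d) :=
  {g | IsUnit g ∧ ∀ x y : Vd d, betaB d (g.mulVec x) (g.mulVec y) = betaB d x y}

/-- `G = SO_{2,d-1}(ℝ)_e`, the identity component of `O(β)`. -/
def Gset (d : ℕ) : Set (Mat d) := connectedComponentIn (Obeta d) 1

/-- Anti-de Sitter space `AdS^d = {x : β(x,x) = 1}`. -/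
def AdS (d : ℕ) : Set (Vd d) := {x | betaB d x x = 1}

/-- Standard basis vector `e_i`. -/
def evec (d : ℕ) (i : Fin (d + 1)) : Vd d := fun j => if j = i then 1 else 0

/-- The positive causal cone `V₊(e₀)` at the base point. -/
def Vplus (d : ℕ) : Set (Vd d) :=
  {v | betaB d (evec d 0) v = 0 ∧ 0 < betaB d v v ∧ 0 < betaB d v (evec d 1)}

/-- A pair `(x,y)` with `x ∈ M`, `β(x,y) = 0` is positive if some `g ∈ G`
moves it into the positive cone at the base point. -/
def posPair (d : ℕ) (x y : Vd d) : Prop :=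
  ∃ g ∈ Gset d, g.mulVec x = evec d 0 ∧ g.mulVec y ∈ Vplus d

/-- Representing `z = x + iy ∈ V_ℂ` as the pair `(x,y)`: the set
`M_ℂ ∩ (V + i V_{>0})`. -/
def TubeSrc (d : ℕ) : Set (Vd d × Vd d) :=
  {p | betaB d p.1 p.1 - betaB d p.2 p.2 = 1 ∧ betaB d p.1 p.2 = 0 ∧ 0 < betaB d p.2 p.2}

/-- The positive tube domain `𝒯_M⁺`: those `z = x + iy` in `M_ℂ ∩ 𝒯_V` for which
`Γ(z) = β(x,x)^{-1/2}(x,y)` is a positive pair. -/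
def TubePlus (d : ℕ) : Set (Vd d × Vd d) :=
  {p | p ∈ TubeSrc d ∧
    posPair d ((Real.sqrt (betaB d p.1 p.1))⁻¹ • p.1) ((Real.sqrt (betaB d p.1 p.1))⁻¹ • p.2)}

/-- The involution `τ_h = diag(1,−1,−1,1,…,1)`. -/
def tauh (d : ℕ) : Mat d :=
  Matrix.diagonal fun j : Fin (d + 1) => if (j : ℕ) = 1 ∨ (j : ℕ) = 2 then (-1 : ℝ) else 1

/-- The Euler element `h` with `h e₁ = e₂`, `h e₂ = e₁`, `h e_j = 0` otherwise. -/
def hmat (d : ℕ) : Mat d :=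
  Matrix.of fun i j : Fin (d + 1) =>
    if ((i : ℕ) = 1 ∧ (j : ℕ) = 2) ∨ ((i : ℕ) = 2 ∧ (j : ℕ) = 1) then (1 : ℝ) else 0

/-- The centralizer `G^h = {g ∈ G : gh = hg}`. -/
def Gh (d : ℕ) : Set (Mat d) := {g ∈ Gset d | g * hmat d = hmat d * g}

/-- The positivity domain `W_M⁺(h) = {x ∈ M : (x, hx) is positive}`. -/
def WplusDom (d : ℕ) : Set (Vd d) := {x ∈ AdS d | posPair d x ((hmat d).mulVec x)}

/-- `α_{it}(x) = (x₀, cos t·x₁ + i sin t·x₂, cos t·x₂ + i sin t·x₁, x₃, …, x_d)`,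
written as a pair (real part, imaginary part). -/
def alphaIt (d : ℕ) (t : ℝ) (x : Vd d) : Vd d × Vd d :=
  (fun j => if (j : ℕ) = 1 ∨ (j : ℕ) = 2 then Real.cos t * x j else x j,
   fun j => if (j : ℕ) = 1 then Real.sin t * x 2
            else if (j : ℕ) = 2 then Real.sin t * x 1 else 0)

/-- The KMS wedge domain `W_M^{KMS}(h)`. -/
def KMSdom (d : ℕ) : Set (Vd d) :=
  {x ∈ AdS d | ∀ t : ℝ, 0 < t → t < Real.pi → alphaIt d t x ∈ TubePlus d}

/-- The Wick rotation `κ_h(z₀,z₁,z₂,z₃,…) = (z₀, −iz₂, −iz₁, z₃, …)`,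
written on pairs `(x,y)` representing `z = x + iy`. -/
def kappah (d : ℕ) (p : Vd d × Vd d) : Vd d × Vd d :=
  (fun j => if (j : ℕ) = 1 then p.2 2 else if (j : ℕ) = 2 then p.2 1 else p.1 j,
   fun j => if (j : ℕ) = 1 then -(p.1 2) else if (j : ℕ) = 2 then -(p.1 1) else p.2 j)

/-! A `τ̄_h`-fixed point of `𝒯_M⁺` is `X + i(a e₁ + b e₂)` with `X ⊥ e₁, e₂`; `κ_h` sends it
to `x = X + b e₁ + a e₂`, and `α_{it}(x) = X + cos t (b e₁ + a e₂) + i sin t (a e₁ + b e₂)`,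
which is the original point at `t = π/2`. For other `t`, the normalised real part is a unit
vector in the Lorentzian plane spanned by `X` and `b e₁ + a e₂`; the hyperbolic rotation of that
plane lies in `G`, fixes `a e₁ + b e₂`, and carries `Γ` at `t = π/2` to `Γ` at `t` up to a
positive rescaling of the imaginary part, so positivity propagates to all `t ∈ (0, π)`. -/

variable {d : ℕ}

section Form

lemma betaB_comm (x y : Vd d) : betaB d x y = betaB d y x :=
  Finset.sum_congr rfl fun j _ => by ring

lemma betaB_add_right (x y z : Vd d) : betaB d x (y + z) = betaB d x y + betaB d x z := by
  unfold betaB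
  rw [← Finset.sum_add_distrib]
  exact Finset.sum_congr rfl fun j _ => by simp only [Pi.add_apply]; ring

lemma betaB_smul_right (c : ℝ) (x y : Vd d) : betaB d x (c • y) = c * betaB d x y := by
  unfold betaB
  rw [Finset.mul_sum]
  exact Finset.sum_congr rfl fun j _ => by simp only [Pi.smul_apply, smul_eq_mul]; ring

lemma betaB_add_left (x y z : Vd d) : betaB d (x + y) z = betaB d x z + betaB d y z := by
  rw [betaB_comm, betaB_add_right, betaB_comm, betaB_comm z y]

lemma betaB_smul_left (c : ℝ) (x y : Vd d) : betaB d (c • x) y = c * betaB d x y := by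
  rw [betaB_comm, betaB_smul_right, betaB_comm]

end Form

section Group

lemma one_mem_Obeta : (1 : Mat d) ∈ Obeta d :=
  ⟨isUnit_one, fun x y => by rw [Matrix.one_mulVec, Matrix.one_mulVec]⟩

lemma mul_mem_Obeta {g k : Mat d} (hg : g ∈ Obeta d) (hk : k ∈ Obeta d) : g * k ∈ Obeta d :=
  ⟨hg.1.mul hk.1, fun x y => by rw [← Matrix.mulVec_mulVec, ← Matrix.mulVec_mulVec, hg.2, hk.2]⟩

lemma Gset_subset_Obeta : Gset d ⊆ Obeta d := connectedComponentIn_subset _ _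

lemma one_mem_Gset : (1 : Mat d) ∈ Gset d := mem_connectedComponentIn one_mem_Obeta

/-- Left multiplication by `g ∈ G` maps `G` into the component of `O(β)` through `g`, which is
`G`. -/
lemma mul_mem_Gset {g k : Mat d} (hg : g ∈ Gset d) (hk : k ∈ Gset d) : g * k ∈ Gset d := by
  have hcont : Continuous fun M : Mat d => g * M := continuous_const.matrix_mul continuous_id
  have himage : (g * ·) '' Gset d ⊆ connectedComponentIn (Obeta d) g := by
    apply IsPreconnected.subset_connectedComponentIn
    · exact isPreconnected_connectedComponentIn.image _ hcont.continuousOn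
    · exact ⟨1, one_mem_Gset, mul_one g⟩
    · rintro _ ⟨M, hM, rfl⟩
      exact mul_mem_Obeta (Gset_subset_Obeta hg) (Gset_subset_Obeta hM)
  rw [Gset, connectedComponentIn_eq hg]
  exact himage ⟨k, hk, rfl⟩

lemma posPair_of_mulVec {k : Mat d} (hk : k ∈ Gset d) {x y : Vd d}
    (h : posPair d (k.mulVec x) (k.mulVec y)) : posPair d x y := by
  obtain ⟨g, hg, hgx, hgy⟩ := h
  exact ⟨g * k, mul_mem_Gset hg hk, by rwa [← Matrix.mulVec_mulVec],
    by rwa [← Matrix.mulVec_mulVec]⟩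

lemma smul_mem_Vplus {v : Vd d} {c : ℝ} (hc : 0 < c) (hv : v ∈ Vplus d) : c • v ∈ Vplus d := by
  obtain ⟨h0, hvv, h1⟩ := hv
  refine ⟨by rw [betaB_smul_right, h0, mul_zero], ?_, ?_⟩
  · rw [betaB_smul_left, betaB_smul_right]
    exact mul_pos hc (mul_pos hc hvv)
  · rw [betaB_smul_left]
    exact mul_pos hc h1

lemma posPair.smul_right {x y : Vd d} (h : posPair d x y) {c : ℝ} (hc : 0 < c) :
    posPair d x (c • y) := by
  obtain ⟨g, hg, hgx, hgy⟩ := h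
  exact ⟨g, hg, hgx, by rw [Matrix.mulVec_smul]; exact smul_mem_Vplus hc hgy⟩

end Group

section Boost

def betaOuter (d : ℕ) (u w : Vd d) : Mat d :=
  Matrix.of fun i j => u i * ((if (j : ℕ) ≤ 1 then 1 else -1) * w j)

lemma betaOuter_mulVec (u w v : Vd d) : (betaOuter d u w).mulVec v = betaB d w v • u := by
  funext i
  simp only [betaOuter, betaB, Matrix.mulVec, dotProduct, Matrix.of_apply, Pi.smul_apply,
    smul_eq_mul, Finset.sum_mul]
  exact Finset.sum_congr rfl fun j _ => by ring

def boost (d : ℕ) (X F : Vd d) (θ : ℝ) : Mat d :=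
  1 + (Real.cosh θ - 1) • (betaOuter d X X - betaOuter d F F)
    + Real.sinh θ • (betaOuter d F X - betaOuter d X F)

lemma boost_mulVec (X F v : Vd d) (θ : ℝ) :
    (boost d X F θ).mulVec v =
      v + ((Real.cosh θ - 1) * betaB d X v - Real.sinh θ * betaB d F v) • X
        + (Real.sinh θ * betaB d X v - (Real.cosh θ - 1) * betaB d F v) • F := by
  simp only [boost, Matrix.add_mulVec, Matrix.smul_mulVec, Matrix.sub_mulVec, Matrix.one_mulVec,
    betaOuter_mulVec]
  module

variable {X F : Vd d}

lemma boost_mulVec_of_orthogonal (θ : ℝ) {v : Vd d} (hXv : betaB d X v = 0)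
    (hFv : betaB d F v = 0) : (boost d X F θ).mulVec v = v := by
  rw [boost_mulVec, hXv, hFv]
  module

lemma boost_mulVec_left (hX : betaB d X X = 1) (hXF : betaB d X F = 0) (θ : ℝ) :
    (boost d X F θ).mulVec X = Real.cosh θ • X + Real.sinh θ • F := by
  rw [boost_mulVec, hX, betaB_comm, hXF]
  module

lemma boost_neg_mulVec_boost_mulVec (hX : betaB d X X = 1) (hF : betaB d F F = -1)
    (hXF : betaB d X F = 0) (θ : ℝ) (v : Vd d) :
    (boost d X F (-θ)).mulVec ((boost d X F θ).mulVec v) = v := by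
  have hFX : betaB d F X = 0 := by rw [betaB_comm, hXF]
  rw [boost_mulVec, boost_mulVec]
  simp only [betaB_add_right, betaB_smul_right, hX, hF, hXF, hFX, Real.cosh_neg, Real.sinh_neg]
  match_scalars
  · rfl
  · linear_combination betaB d X v * Real.cosh_sq_sub_sinh_sq θ
  · linear_combination -betaB d F v * Real.cosh_sq_sub_sinh_sq θ

lemma betaB_boost_mulVec (hX : betaB d X X = 1) (hF : betaB d F F = -1)
    (hXF : betaB d X F = 0) (θ : ℝ) (v w : Vd d) :
    betaB d ((boost d X F θ).mulVec v) ((boost d X F θ).mulVec w) = betaB d v w := by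
  have hFX : betaB d F X = 0 := by rw [betaB_comm, hXF]
  rw [boost_mulVec, boost_mulVec]
  simp only [betaB_add_left, betaB_add_right, betaB_smul_left, betaB_smul_right,
    hX, hF, hXF, hFX, betaB_comm v X, betaB_comm v F]
  linear_combination (betaB d X v * betaB d X w - betaB d F v * betaB d F w) *
    Real.cosh_sq_sub_sinh_sq θ

lemma boost_mem_Obeta (hX : betaB d X X = 1) (hF : betaB d F F = -1)
    (hXF : betaB d X F = 0) (θ : ℝ) : boost d X F θ ∈ Obeta d := by
  refine ⟨Matrix.mulVec_injective_iff_isUnit.mp fun v w hvw => ?_,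
    betaB_boost_mulVec hX hF hXF θ⟩
  rw [← boost_neg_mulVec_boost_mulVec hX hF hXF θ v, hvw,
    boost_neg_mulVec_boost_mulVec hX hF hXF θ w]

/-- `θ ↦ boost θ` is a path in `O(β)` from `1`. -/
lemma boost_mem_Gset (hX : betaB d X X = 1) (hF : betaB d F F = -1)
    (hXF : betaB d X F = 0) (θ : ℝ) : boost d X F θ ∈ Gset d := by
  have hcont : Continuous (boost d X F) := by unfold boost; fun_prop
  have hrange : Set.range (boost d X F) ⊆ Gset d := by
    apply IsPreconnected.subset_connectedComponentIn (isPreconnected_range hcont)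
    · exact ⟨0, by simp [boost]⟩
    · rintro _ ⟨t, rfl⟩
      exact boost_mem_Obeta hX hF hXF t
  exact hrange ⟨θ, rfl⟩

lemma posPair_cosh_smul_add_sinh_smul (hX : betaB d X X = 1) (hF : betaB d F F = -1)
    (hXF : betaB d X F = 0) {Y : Vd d} (hXY : betaB d X Y = 0) (hFY : betaB d F Y = 0)
    (h : posPair d X Y) (θ : ℝ) {c : ℝ} (hc : 0 < c) :
    posPair d (Real.cosh θ • X + Real.sinh θ • F) (c • Y) := by
  apply posPair_of_mulVec (boost_mem_Gset hX hF hXF (-θ))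
  rw [← boost_mulVec_left hX hXF, boost_neg_mulVec_boost_mulVec hX hF hXF, Matrix.mulVec_smul,
    boost_mulVec_of_orthogonal _ hXY hFY]
  exact h.smul_right hc

end Boost

section Coordinates

lemma val_one (hd : 2 ≤ d) : ((1 : Fin (d + 1)) : ℕ) = 1 := by
  rw [Fin.val_one', Nat.mod_eq_of_lt (by omega)]

lemma val_two (hd : 2 ≤ d) : ((2 : Fin (d + 1)) : ℕ) = 2 := by
  rw [show ((2 : Fin (d + 1)) : ℕ) = 2 % (d + 1) from rfl, Nat.mod_eq_of_lt (by omega)]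

lemma val_eq_one_iff (hd : 2 ≤ d) {j : Fin (d + 1)} : (j : ℕ) = 1 ↔ j = 1 := by
  rw [Fin.ext_iff, val_one hd]

lemma val_eq_two_iff (hd : 2 ≤ d) {j : Fin (d + 1)} : (j : ℕ) = 2 ↔ j = 2 := by
  rw [Fin.ext_iff, val_two hd]

lemma one_ne_two (hd : 2 ≤ d) : (1 : Fin (d + 1)) ≠ 2 := by
  rw [Ne, Fin.ext_iff, val_one hd, val_two hd]
  omega

def planeVec (d : ℕ) (a b : ℝ) : Vd d := fun j =>
  if (j : ℕ) = 1 then a else if (j : ℕ) = 2 then b else 0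

lemma planeVec_apply_one (hd : 2 ≤ d) (a b : ℝ) : planeVec d a b 1 = a := by
  simp only [planeVec, val_one hd, ↓reduceIte]

lemma planeVec_apply_two (hd : 2 ≤ d) (a b : ℝ) : planeVec d a b 2 = b := by
  simp only [planeVec, val_two hd, OfNat.ofNat_ne_one, ↓reduceIte]

lemma betaB_planeVec_right (hd : 2 ≤ d) (z : Vd d) (a b : ℝ) :
    betaB d z (planeVec d a b) = z 1 * a - z 2 * b := by
  unfold betaB
  rw [Finset.sum_eq_add_of_mem 1 2 (Finset.mem_univ _) (Finset.mem_univ _) (one_ne_two hd)]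
  · simp only [planeVec_apply_one hd, planeVec_apply_two hd, val_one hd, val_two hd]
    norm_num
    ring
  · rintro j - ⟨h1, h2⟩
    simp [planeVec, val_eq_one_iff hd, val_eq_two_iff hd, h1, h2]

lemma tauh_mulVec_apply (v : Vd d) (j : Fin (d + 1)) :
    (tauh d).mulVec v j = if (j : ℕ) = 1 ∨ (j : ℕ) = 2 then -v j else v j := by
  rw [tauh, Matrix.mulVec_diagonal]
  split_ifs <;> ring

lemma tauh_mulVec_eq_self_iff (hd : 2 ≤ d) {X : Vd d} :
    (tauh d).mulVec X = X ↔ X 1 = 0 ∧ X 2 = 0 := by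
  simp only [funext_iff, tauh_mulVec_apply, val_eq_one_iff hd, val_eq_two_iff hd]
  constructor
  · intro h
    have h1 : -X 1 = X 1 := by simpa using h 1
    have h2 : -X 2 = X 2 := by simpa [one_ne_two hd] using h 2
    exact ⟨by linarith, by linarith⟩
  · rintro ⟨h1, h2⟩ j
    split_ifs with hj
    · rcases hj with rfl | rfl <;> simp [h1, h2]
    · rfl

lemma tauh_mulVec_eq_neg_iff (hd : 2 ≤ d) {Y : Vd d} :
    (tauh d).mulVec Y = -Y ↔ Y = planeVec d (Y 1) (Y 2) := by
  simp only [funext_iff, tauh_mulVec_apply, Pi.neg_apply, planeVec, val_eq_one_iff hd,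
    val_eq_two_iff hd]
  constructor
  · intro h j
    by_cases h1 : j = 1
    · simp [h1]
    by_cases h2 : j = 2
    · simp [h2, (one_ne_two hd).symm]
    have hj : -Y j = Y j := by simpa [h1, h2] using (h j).symm
    rw [if_neg h1, if_neg h2]
    linarith
  · intro h j
    split_ifs with hj
    · rfl
    · obtain ⟨h1, h2⟩ := not_or.1 hj
      rw [h j, if_neg h1, if_neg h2, neg_zero]

lemma alphaIt_add_planeVec (hd : 2 ≤ d) {X : Vd d} (hX1 : X 1 = 0) (hX2 : X 2 = 0)
    (t a b : ℝ) :
    alphaIt d t (X + planeVec d a b) =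
      (X + Real.cos t • planeVec d a b, Real.sin t • planeVec d b a) := by
  ext j
  all_goals
    simp only [alphaIt, planeVec, Pi.add_apply, Pi.smul_apply, smul_eq_mul, val_eq_one_iff hd,
      val_eq_two_iff hd]
    split_ifs <;> simp_all [one_ne_two hd, (one_ne_two hd).symm]

lemma kappah_planeVec (hd : 2 ≤ d) {X : Vd d} (hX1 : X 1 = 0) (hX2 : X 2 = 0) (a b : ℝ) :
    kappah d (X, planeVec d a b) = (X + planeVec d b a, 0) := by
  ext j
  all_goals
    simp only [kappah, planeVec, Pi.add_apply, Pi.zero_apply, val_eq_one_iff hd,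
      val_eq_two_iff hd]
    split_ifs <;> simp_all [(one_ne_two hd).symm]

end Coordinates

section Tube

lemma betaB_planeVec_planeVec (hd : 2 ≤ d) (a b a' b' : ℝ) :
    betaB d (planeVec d a b) (planeVec d a' b') = a * a' - b * b' := by
  rw [betaB_planeVec_right hd, planeVec_apply_one hd, planeVec_apply_two hd]

lemma betaB_planeVec_of_apply_eq_zero (hd : 2 ≤ d) {X : Vd d} (hX1 : X 1 = 0) (hX2 : X 2 = 0)
    (a b : ℝ) : betaB d X (planeVec d a b) = 0 := by
  rw [betaB_planeVec_right hd, hX1, hX2]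
  ring

lemma add_planeVec_mem_AdS (hd : 2 ≤ d) {X : Vd d} (hX1 : X 1 = 0) (hX2 : X 2 = 0) {a b : ℝ}
    (hp : (X, planeVec d a b) ∈ TubeSrc d) : X + planeVec d b a ∈ AdS d := by
  have hXP := betaB_planeVec_of_apply_eq_zero hd hX1 hX2 b a
  obtain ⟨hsrc, -⟩ := hp
  simp only [betaB_planeVec_planeVec hd] at hsrc
  show betaB d _ _ = 1
  simp only [betaB_add_left, betaB_add_right, hXP, betaB_comm _ X,
    betaB_planeVec_planeVec hd]
  linarith

lemma posPair_add_smul_planeVec (hd : 2 ≤ d) {X : Vd d} (hX1 : X 1 = 0) (hX2 : X 2 = 0)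
    {a b c σ : ℝ} (hA : 0 < a * a - b * b) (hXX : betaB d X X = 1 + (a * a - b * b))
    (hcσ : c ^ 2 + σ ^ 2 = 1) (hσ : 0 < σ)
    (h : posPair d ((√(1 + (a * a - b * b)))⁻¹ • X) ((√(1 + (a * a - b * b)))⁻¹ • planeVec d a b)) :
    posPair d ((√(1 + σ ^ 2 * (a * a - b * b)))⁻¹ • (X + c • planeVec d b a))
      ((√(1 + σ ^ 2 * (a * a - b * b)))⁻¹ • (σ • planeVec d a b)) := by
  have hXP := betaB_planeVec_of_apply_eq_zero hd hX1 hX2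
  have hPP := betaB_planeVec_planeVec (d := d) hd
  set A := a * a - b * b
  set r := √(1 + A)
  set s := √A
  set ρ := √(1 + σ ^ 2 * A)
  have hr : r ^ 2 = 1 + A := Real.sq_sqrt (by positivity)
  have hs : s ^ 2 = A := Real.sq_sqrt hA.le
  have hρ : ρ ^ 2 = 1 + σ ^ 2 * A := Real.sq_sqrt (by positivity)
  have hr0 : 0 < r := Real.sqrt_pos.2 (by positivity)
  have hs0 : 0 < s := Real.sqrt_pos.2 hA
  have hρ0 : 0 < ρ := Real.sqrt_pos.2 (by positivity)
  -- with `sinh θ = c s / ρ`, `cosh θ = r / ρ`: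
  -- `ρ⁻¹ • (X + c • planeVec b a) = cosh θ • r⁻¹ • X + sinh θ • s⁻¹ • planeVec b a`
  have hcosh : √(1 + (c * s / ρ) ^ 2) = r / ρ := by
    rw [Real.sqrt_eq_iff_eq_sq (by positivity) (by positivity)]
    field_simp
    rw [hs, hr, hρ]
    linear_combination A * hcσ
  have hboost := posPair_cosh_smul_add_sinh_smul (X := r⁻¹ • X) (F := s⁻¹ • planeVec d b a)
    (by rw [betaB_smul_left, betaB_smul_right, hXX, ← hr]; field_simp)
    (by rw [betaB_smul_left, betaB_smul_right, hPP]; field_simp; linear_combination hs)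
    (by rw [betaB_smul_left, betaB_smul_right, hXP, mul_zero, mul_zero])
    (by rw [betaB_smul_left, betaB_smul_right, hXP, mul_zero, mul_zero])
    (by rw [betaB_smul_left, betaB_smul_right, hPP]; ring)
    h (Real.arsinh (c * s / ρ)) (c := σ * r / ρ) (by positivity)
  rw [Real.cosh_arsinh, Real.sinh_arsinh, hcosh] at hboost
  convert hboost using 1 <;> match_scalars <;> field_simp

theorem add_cos_smul_planeVec_mem_TubePlus (hd : 2 ≤ d) {X : Vd d} (hX1 : X 1 = 0)
    (hX2 : X 2 = 0) {a b t : ℝ} (hp : (X, planeVec d a b) ∈ TubePlus d) (ht : 0 < Real.sin t) :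
    (X + Real.cos t • planeVec d b a, Real.sin t • planeVec d a b) ∈ TubePlus d := by
  obtain ⟨⟨hsrc, -, hYY⟩, hpos⟩ := hp
  have hXP := betaB_planeVec_of_apply_eq_zero hd hX1 hX2
  have hPX : ∀ a b, betaB d (planeVec d a b) X = 0 := fun a b => by rw [betaB_comm, hXP]
  have hPP := betaB_planeVec_planeVec (d := d) hd
  simp only [hPP] at hsrc hYY
  have hXX : betaB d X X = 1 + (a * a - b * b) := by linarith
  have hcs : Real.cos t ^ 2 + Real.sin t ^ 2 = 1 := Real.cos_sq_add_sin_sq t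
  have huu : betaB d (X + Real.cos t • planeVec d b a) (X + Real.cos t • planeVec d b a) =
      1 + Real.sin t ^ 2 * (a * a - b * b) := by
    simp only [betaB_add_left, betaB_add_right, betaB_smul_left, betaB_smul_right, hXP, hPX,
      hPP, hXX]
    linear_combination -(a * a - b * b) * hcs
  have huv : betaB d (X + Real.cos t • planeVec d b a) (Real.sin t • planeVec d a b) = 0 := by
    simp only [betaB_add_left, betaB_smul_left, betaB_smul_right, hXP, hPP]
    ring
  have hvv : betaB d (Real.sin t • planeVec d a b) (Real.sin t • planeVec d a b) =
      Real.sin t ^ 2 * (a * a - b * b) := by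
    simp only [betaB_smul_left, betaB_smul_right, hPP]
    ring
  refine ⟨⟨by rw [huu, hvv]; ring, huv, by rw [hvv]; positivity⟩, ?_⟩
  dsimp only at hpos ⊢
  rw [huu]
  rw [hXX] at hpos
  exact posPair_add_smul_planeVec hd hX1 hX2 hYY hXX hcs ht hpos

end Tube

/-- `W_M^{KMS}(h) = κ_h((𝒯_M⁺)^{τ̄_h})`, where `M ⊆ V ⊆ V_ℂ`
(a real point `x` is the pair `(x,0)`). -/
theorem stmt13 (d : ℕ) (hd : 2 ≤ d) :
    (fun x : Vd d => (x, (0 : Vd d))) '' KMSdom d =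
      kappah d ''
        {p ∈ TubePlus d | (tauh d).mulVec p.1 = p.1 ∧ (tauh d).mulVec p.2 = -p.2} := by
  apply Set.Subset.antisymm
  · rintro _ ⟨x, ⟨-, hx⟩, rfl⟩
    set X := x - planeVec d (x 1) (x 2)
    have hX1 : X 1 = 0 := by simp [X, planeVec_apply_one hd]
    have hX2 : X 2 = 0 := by simp [X, planeVec_apply_two hd]
    have hxX : x = X + planeVec d (x 1) (x 2) := (sub_add_cancel _ _).symm
    have hα := hx (Real.pi / 2) (by positivity) (by linarith [Real.pi_pos])
    rw [hxX, alphaIt_add_planeVec hd hX1 hX2, Real.cos_pi_div_two, Real.sin_pi_div_two,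
      zero_smul, add_zero, one_smul] at hα
    refine ⟨_, ⟨hα, (tauh_mulVec_eq_self_iff hd).2 ⟨hX1, hX2⟩, (tauh_mulVec_eq_neg_iff hd).2 ?_⟩,
      ?_⟩
    · dsimp only
      rw [planeVec_apply_one hd, planeVec_apply_two hd]
    · rw [kappah_planeVec hd hX1 hX2, ← hxX]
  · rintro _ ⟨⟨X, Y⟩, ⟨hp, hX, hY⟩, rfl⟩
    dsimp only at hX hY
    obtain ⟨hX1, hX2⟩ := (tauh_mulVec_eq_self_iff hd).1 hX
    rw [tauh_mulVec_eq_neg_iff hd] at hY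
    generalize Y 1 = a, Y 2 = b at hY
    subst hY
    rw [kappah_planeVec hd hX1 hX2]
    refine ⟨_, ⟨add_planeVec_mem_AdS hd hX1 hX2 hp.1, fun t ht0 htπ => ?_⟩, rfl⟩
    rw [alphaIt_add_planeVec hd hX1 hX2]
    exact add_cos_smul_planeVec_mem_TubePlus hd hX1 hX2 hp (Real.sin_pos_of_pos_of_lt_pi ht0 htπ)
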